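/- arXiv:2103.03787 — 3 statements merged into one kernel-verified Lean document; each statement's English description precedes it below -/
import Mathlib

section
/- Let X̃ ⊆ X be a subspace invariant under σ'(ξ,v) for every (ξ,v) ∈ 𝔰, and let K̃ : X̃ × X̃* → 𝔰* be the momentum map of the restricted representation, ⟨K̃(x̃,ã),(ξ,v)⟩ = ⟨ã, σ'(ξ,v)x̃⟩. Let U : X* → ℝ and Ũ : X̃* → ℝ be differentiable. Let (ξ,v) : I → 𝔰, a : I → X*, ã : I → X̃*, u : I → 𝔰* be curves on a real interval I such that t ↦ A(ξ(t),v(t)) is differentiable. Then: (i) if u(t) = K(δU/δa(a(t)), a(t)) − K̃(δŨ/δã(ã(t)), ã(t)), then at every t the controlled Euler–Poincaré momentum equation d/dt[A(ξ,v)] = ad*_{(ξ,v)}A(ξ,v) − K(δU/δa(a), a) + u(t) holds if and only if the matched Euler–Poincaré momentum equation d/dt[A(ξ,v)] = ad*_{(ξ,v)}A(ξ,v) − K̃(δŨ/δã(ã), ã) holds; (ii) conversely, if both equations hold at some t, then u(t) = K(δU/δa(a(t)), a(t)) − K̃(δŨ/δã(ã(t)), ã(t)). -/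
open NormedSpace

theorem sub_add_eq_sub_iff_eq_sub {M : Type*} [AddCommGroup M] (m k k' u : M) :
    m - k + u = m - k' ↔ u = k - k' := by
  rw [← sub_add_sub_cancel m k k', add_right_inj]

theorem matching_via_subrepresentation_general
    {G V X : Type*}
    [NormedAddCommGroup G] [NormedSpace ℝ G]
    [LieRing G] [LieAlgebra ℝ G]
    [NormedAddCommGroup V] [NormedSpace ℝ V]
    [NormedAddCommGroup X] [NormedSpace ℝ X]
    -- the coadjoint action ⟨ad*_{(ξ,v)}μ, (η,w)⟩ = ⟨μ, [(ξ,v),(η,w)]⟩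
    (adStar : (G × V) → StrongDual ℝ (G × V) → StrongDual ℝ (G × V))
    -- its momentum map K, ⟨K(x,a),(ξ,v)⟩ = ⟨a, σ'(ξ,v)x⟩
    (K : X → StrongDual ℝ X → StrongDual ℝ (G × V))
    -- X̃ ⊆ X is an invariant subspace, with restricted momentum map K̃
    (X' : Submodule ℝ X)
    (K' : X' → StrongDual ℝ X' → StrongDual ℝ (G × V))
    -- the flat map of the left-invariant kinetic-energy metric
    (A : (G × V) →ₗ[ℝ] StrongDual ℝ (G × V))
    -- potentials and their functional derivatives, dU(a)(δa') = ⟨δa', δU/δa(a)⟩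
    (DU : StrongDual ℝ X → X)
    (DU' : StrongDual ℝ X' → X')
    -- curves on a real interval I
    (I : Set ℝ)
    (ξv : ℝ → G × V) (a : ℝ → StrongDual ℝ X) (a' : ℝ → StrongDual ℝ X')
    (u : ℝ → StrongDual ℝ (G × V)) (dA : ℝ → StrongDual ℝ (G × V)) :
    -- (i): under the matching control, the controlled EP momentum equation holds
    --      iff the matched EP momentum equation holds
    ((∀ t ∈ I, u t = K (DU (a t)) (a t) - K' (DU' (a' t)) (a' t)) →
      ∀ t ∈ I,
        (dA t = adStar (ξv t) (A (ξv t)) - K (DU (a t)) (a t) + u t ↔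
          dA t = adStar (ξv t) (A (ξv t)) - K' (DU' (a' t)) (a' t)))
    ∧
    -- (ii): conversely, if both equations hold at some t, the control is the matching one
    (∀ t ∈ I,
      dA t = adStar (ξv t) (A (ξv t)) - K (DU (a t)) (a t) + u t →
      dA t = adStar (ξv t) (A (ξv t)) - K' (DU' (a' t)) (a' t) →
      u t = K (DU (a t)) (a t) - K' (DU' (a' t)) (a' t)) := by
  refine ⟨fun hu t ht => ?_, fun t _ hcontrolled hmatched => ?_⟩
  · rw [(sub_add_eq_sub_iff_eq_sub _ _ _ _).2 (hu t ht)]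
  · exact (sub_add_eq_sub_iff_eq_sub _ _ _ _).1 (hcontrolled.symm.trans hmatched)

/-- **Matching via Subrepresentation** (Theorem in Section 4.2 of the paper).
`G` plays the role of the Lie algebra 𝔤, `V` of the vector space on which it acts via `ρ'`,
so that `G × V` is the semidirect product Lie algebra 𝔰 with bracket `br`.  `σ'` is a
representation of 𝔰 on `X` with momentum map `K`, `X'` is a `σ'`-invariant subspace with
restricted momentum map `K'`, `A` is the flat map of the kinetic-energy metric, `U`, `U'`
are the potentials with functional derivatives `DU`, `DU'`, and `adStar` is the coadjoint
action of 𝔰 on its dual. -/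
theorem matching_via_subrepresentation
    {G V X : Type*}
    [NormedAddCommGroup G] [NormedSpace ℝ G] [FiniteDimensional ℝ G]
    [LieRing G] [LieAlgebra ℝ G]
    [NormedAddCommGroup V] [NormedSpace ℝ V] [FiniteDimensional ℝ V]
    [NormedAddCommGroup X] [NormedSpace ℝ X] [FiniteDimensional ℝ X]
    -- ρ' : 𝔤 → End(V) is a Lie algebra homomorphism
    (ρ' : G →ₗ[ℝ] V →ₗ[ℝ] V)
    (hρ' : ∀ ξ η : G, ρ' ⁅ξ, η⁆ = ρ' ξ ∘ₗ ρ' η - ρ' η ∘ₗ ρ' ξ)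
    -- the semidirect product bracket on 𝔰 = 𝔤 ⋉ V
    (br : (G × V) → (G × V) → (G × V))
    (hbr : ∀ s₁ s₂ : G × V, br s₁ s₂ = (⁅s₁.1, s₂.1⁆, ρ' s₁.1 s₂.2 - ρ' s₂.1 s₁.2))
    -- the coadjoint action ⟨ad*_{(ξ,v)}μ, (η,w)⟩ = ⟨μ, [(ξ,v),(η,w)]⟩
    (adStar : (G × V) → StrongDual ℝ (G × V) → StrongDual ℝ (G × V))
    (hadStar : ∀ s μ t, adStar s μ t = μ (br s t))
    -- σ' : 𝔰 → End(X) is a Lie algebra homomorphism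
    (σ' : (G × V) →ₗ[ℝ] X →ₗ[ℝ] X)
    (hσ' : ∀ s₁ s₂ : G × V, σ' (br s₁ s₂) = σ' s₁ ∘ₗ σ' s₂ - σ' s₂ ∘ₗ σ' s₁)
    -- its momentum map K, ⟨K(x,a),(ξ,v)⟩ = ⟨a, σ'(ξ,v)x⟩
    (K : X → StrongDual ℝ X → StrongDual ℝ (G × V))
    (hK : ∀ x a s, K x a s = a (σ' s x))
    -- X̃ ⊆ X is an invariant subspace, with restricted momentum map K̃
    (X' : Submodule ℝ X)
    (hinv : ∀ s : G × V, ∀ x ∈ X', σ' s x ∈ X')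
    (K' : X' → StrongDual ℝ X' → StrongDual ℝ (G × V))
    (hK' : ∀ (x : X') (a : StrongDual ℝ X') (s : G × V),
      K' x a s = a ⟨σ' s x, hinv s x x.2⟩)
    -- the flat map of the left-invariant kinetic-energy metric
    (A : (G × V) →ₗ[ℝ] StrongDual ℝ (G × V))
    -- potentials and their functional derivatives, dU(a)(δa') = ⟨δa', δU/δa(a)⟩
    (U : StrongDual ℝ X → ℝ) (DU : StrongDual ℝ X → X)
    (hU : ∀ a, HasFDerivAt U (inclusionInDoubleDual ℝ X (DU a)) a)
    (U' : StrongDual ℝ X' → ℝ) (DU' : StrongDual ℝ X' → X')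
    (hU' : ∀ a, HasFDerivAt U' (inclusionInDoubleDual ℝ X' (DU' a)) a)
    -- curves on a real interval I
    (I : Set ℝ) (hI : I.OrdConnected)
    (ξv : ℝ → G × V) (a : ℝ → StrongDual ℝ X) (a' : ℝ → StrongDual ℝ X')
    (u : ℝ → StrongDual ℝ (G × V)) (dA : ℝ → StrongDual ℝ (G × V))
    (hdA : ∀ t ∈ I, HasDerivAt (fun τ => A (ξv τ)) (dA t) t) :
    -- (i): under the matching control, the controlled EP momentum equation holds
    --      iff the matched EP momentum equation holds
    ((∀ t ∈ I, u t = K (DU (a t)) (a t) - K' (DU' (a' t)) (a' t)) →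
      ∀ t ∈ I,
        (dA t = adStar (ξv t) (A (ξv t)) - K (DU (a t)) (a t) + u t ↔
          dA t = adStar (ξv t) (A (ξv t)) - K' (DU' (a' t)) (a' t)))
    ∧
    -- (ii): conversely, if both equations hold at some t, the control is the matching one
    (∀ t ∈ I,
      dA t = adStar (ξv t) (A (ξv t)) - K (DU (a t)) (a t) + u t →
      dA t = adStar (ξv t) (A (ξv t)) - K' (DU' (a' t)) (a' t) →
      u t = K (DU (a t)) (a t) - K' (DU' (a' t)) (a' t)) :=
  matching_via_subrepresentation_general adStar K X' K' A DU DU' I ξv a a' u dA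
end

section
/- Let τ' : 𝔰 → End(Y) be a Lie algebra homomorphism into the endomorphisms of a finite-dimensional real vector space Y, with momentum map M : Y × Y* → 𝔰*, ⟨M(y,b),(ξ,v)⟩ = ⟨b, τ'(ξ,v)y⟩. Let U : X* → ℝ and Ũ : X* × Y* → ℝ be differentiable, with partial functional derivatives δŨ/δa(a,b) ∈ X and δŨ/δb(a,b) ∈ Y. Let (ξ,v) : I → 𝔰, a : I → X*, b : I → Y*, u : I → 𝔰* be curves on a real interval I such that t ↦ A(ξ(t),v(t)) is differentiable. Then: (i) if u(t) = −K(δŨ/δa(a(t),b(t)), a(t)) − M(δŨ/δb(a(t),b(t)), b(t)), then at every t the controlled Euler–Poincaré momentum equation d/dt[A(ξ,v)] = ad*_{(ξ,v)}A(ξ,v) − K(δU/δa(a), a) + u(t) holds if and only if the matched Euler–Poincaré momentum equation d/dt[A(ξ,v)] = ad*_{(ξ,v)}A(ξ,v) − K(δU/δa(a) + δŨ/δa(a,b), a) − M(δŨ/δb(a,b), b) holds; (ii) conversely, if both equations hold at some t, then u(t) = −K(δŨ/δa(a(t),b(t)), a(t)) − M(δŨ/δb(a(t),b(t)), b(t)).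 -/
/-!
The controlled and the matched Euler–Poincaré momentum equations share the terms
`d/dt A(ξ,v)` and `ad*_{(ξ,v)} A(ξ,v)`, and the momentum map `K(x, a)` is additive in `x`.
Hence `K(δU/δa + δŨ/δa, a) = K(δU/δa, a) + K(δŨ/δa, a)`, and the two equations differ
exactly by the control `u` being replaced by `-K(δŨ/δa, a) - M(δŨ/δb, b)`.
-/

theorem momentumMap_add_left {R S X : Type*} [Semiring R] [TopologicalSpace R] [ContinuousAdd R]
    [TopologicalSpace S] [AddCommMonoid S] [Module R S]
    [TopologicalSpace X] [AddCommMonoid X] [Module R X]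
    {σ : S → X →ₗ[R] X} {K : X → StrongDual R X → StrongDual R S}
    (hK : ∀ x a s, K x a s = a (σ s x)) (x x' : X) (a : StrongDual R X) :
    K (x + x') a = K x a + K x' a := by
  ext s
  simp only [hK, map_add, add_apply]

section Matching

variable {E : Type*} [AddCommGroup E] {d e k₀ k m u : E}

theorem controlled_iff_matched (hu : u = -k - m) :
    d = e - k₀ + u ↔ d = e - (k₀ + k) - m := by
  rw [hu, show e - k₀ + (-k - m) = e - (k₀ + k) - m by abel]

theorem control_eq_of_controlled_of_matched (hc : d = e - k₀ + u)
    (hm : d = e - (k₀ + k) - m) : u = -k - m := by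
  have h : e - k₀ + u = e - k₀ + (-k - m) := by
    rw [← hc, hm]
    abel
  exact add_left_cancel h

end Matching

open NormedSpace

theorem matching_with_additional_variables_general
    {G V X Y : Type*}
    [NormedAddCommGroup G] [NormedSpace ℝ G]
    [LieRing G] [LieAlgebra ℝ G]
    [NormedAddCommGroup V] [NormedSpace ℝ V]
    [NormedAddCommGroup X] [NormedSpace ℝ X]
    [NormedAddCommGroup Y] [NormedSpace ℝ Y]
    -- the coadjoint action ⟨ad*_{(ξ,v)}μ, (η,w)⟩ = ⟨μ, [(ξ,v),(η,w)]⟩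
    (adStar : (G × V) → StrongDual ℝ (G × V) → StrongDual ℝ (G × V))
    -- σ' : 𝔰 → End(X) is a Lie algebra homomorphism, with momentum map K
    (σ' : (G × V) →ₗ[ℝ] X →ₗ[ℝ] X)
    (K : X → StrongDual ℝ X → StrongDual ℝ (G × V))
    (hK : ∀ x a s, K x a s = a (σ' s x))
    (M : Y → StrongDual ℝ Y → StrongDual ℝ (G × V))
    -- the flat map of the left-invariant kinetic-energy metric
    (A : (G × V) →ₗ[ℝ] StrongDual ℝ (G × V))
    -- potentials and their (partial) functional derivatives
    (DU : StrongDual ℝ X → X)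
    (DUa : StrongDual ℝ X × StrongDual ℝ Y → X) (DUb : StrongDual ℝ X × StrongDual ℝ Y → Y)
    -- curves on a real interval I
    (I : Set ℝ)
    (ξv : ℝ → G × V) (a : ℝ → StrongDual ℝ X) (b : ℝ → StrongDual ℝ Y)
    (u : ℝ → StrongDual ℝ (G × V)) (dA : ℝ → StrongDual ℝ (G × V)) :
    -- (i): under the matching control, the controlled EP momentum equation holds
    --      iff the matched EP momentum equation holds
    ((∀ t ∈ I, u t = -K (DUa (a t, b t)) (a t) - M (DUb (a t, b t)) (b t)) →
      ∀ t ∈ I,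
        (dA t = adStar (ξv t) (A (ξv t)) - K (DU (a t)) (a t) + u t ↔
          dA t = adStar (ξv t) (A (ξv t))
            - K (DU (a t) + DUa (a t, b t)) (a t) - M (DUb (a t, b t)) (b t)))
    ∧
    -- (ii): conversely, if both equations hold at some t, the control is the matching one
    (∀ t ∈ I,
      dA t = adStar (ξv t) (A (ξv t)) - K (DU (a t)) (a t) + u t →
      dA t = adStar (ξv t) (A (ξv t))
        - K (DU (a t) + DUa (a t, b t)) (a t) - M (DUb (a t, b t)) (b t) →
      u t = -K (DUa (a t, b t)) (a t) - M (DUb (a t, b t)) (b t)) := by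
  simp only [momentumMap_add_left hK]
  exact ⟨fun hu t ht => controlled_iff_matched (hu t ht),
    fun _ _ => control_eq_of_controlled_of_matched⟩

/-- **Matching with Additional Variables** (Theorem in Section 4.3 of the paper).
`G × V` is the semidirect product Lie algebra 𝔰 = 𝔤 ⋉ V with bracket `br`; `σ'` and `τ'`
are representations of 𝔰 on `X` and `Y` with momentum maps `K` and `M`; `A` is the flat
map of the kinetic-energy metric; `U : X* → ℝ` is the original potential with functional
derivative `DU`, and `U' : X* × Y* → ℝ` is the additional potential with partial
functional derivatives `DUa`, `DUb`; `adStar` is the coadjoint action of 𝔰 on 𝔰*. -/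
theorem matching_with_additional_variables
    {G V X Y : Type*}
    [NormedAddCommGroup G] [NormedSpace ℝ G] [FiniteDimensional ℝ G]
    [LieRing G] [LieAlgebra ℝ G]
    [NormedAddCommGroup V] [NormedSpace ℝ V] [FiniteDimensional ℝ V]
    [NormedAddCommGroup X] [NormedSpace ℝ X] [FiniteDimensional ℝ X]
    [NormedAddCommGroup Y] [NormedSpace ℝ Y] [FiniteDimensional ℝ Y]
    -- ρ' : 𝔤 → End(V) is a Lie algebra homomorphism
    (ρ' : G →ₗ[ℝ] V →ₗ[ℝ] V)
    (hρ' : ∀ ξ η : G, ρ' ⁅ξ, η⁆ = ρ' ξ ∘ₗ ρ' η - ρ' η ∘ₗ ρ' ξ)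
    -- the semidirect product bracket on 𝔰 = 𝔤 ⋉ V
    (br : (G × V) → (G × V) → (G × V))
    (hbr : ∀ s₁ s₂ : G × V, br s₁ s₂ = (⁅s₁.1, s₂.1⁆, ρ' s₁.1 s₂.2 - ρ' s₂.1 s₁.2))
    -- the coadjoint action ⟨ad*_{(ξ,v)}μ, (η,w)⟩ = ⟨μ, [(ξ,v),(η,w)]⟩
    (adStar : (G × V) → StrongDual ℝ (G × V) → StrongDual ℝ (G × V))
    (hadStar : ∀ s μ t, adStar s μ t = μ (br s t))
    -- σ' : 𝔰 → End(X) is a Lie algebra homomorphism, with momentum map K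
    (σ' : (G × V) →ₗ[ℝ] X →ₗ[ℝ] X)
    (hσ' : ∀ s₁ s₂ : G × V, σ' (br s₁ s₂) = σ' s₁ ∘ₗ σ' s₂ - σ' s₂ ∘ₗ σ' s₁)
    (K : X → StrongDual ℝ X → StrongDual ℝ (G × V))
    (hK : ∀ x a s, K x a s = a (σ' s x))
    -- τ' : 𝔰 → End(Y) is a Lie algebra homomorphism, with momentum map M
    (τ' : (G × V) →ₗ[ℝ] Y →ₗ[ℝ] Y)
    (hτ' : ∀ s₁ s₂ : G × V, τ' (br s₁ s₂) = τ' s₁ ∘ₗ τ' s₂ - τ' s₂ ∘ₗ τ' s₁)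
    (M : Y → StrongDual ℝ Y → StrongDual ℝ (G × V))
    (hM : ∀ y b s, M y b s = b (τ' s y))
    -- the flat map of the left-invariant kinetic-energy metric
    (A : (G × V) →ₗ[ℝ] StrongDual ℝ (G × V))
    -- potentials and their (partial) functional derivatives
    (U : StrongDual ℝ X → ℝ) (DU : StrongDual ℝ X → X)
    (hU : ∀ a, HasFDerivAt U (inclusionInDoubleDual ℝ X (DU a)) a)
    (U' : StrongDual ℝ X × StrongDual ℝ Y → ℝ)
    (DUa : StrongDual ℝ X × StrongDual ℝ Y → X) (DUb : StrongDual ℝ X × StrongDual ℝ Y → Y)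
    (hU' : ∀ p : StrongDual ℝ X × StrongDual ℝ Y,
      HasFDerivAt U'
        ((inclusionInDoubleDual ℝ X (DUa p)).comp
            (ContinuousLinearMap.fst ℝ (StrongDual ℝ X) (StrongDual ℝ Y)) +
          (inclusionInDoubleDual ℝ Y (DUb p)).comp
            (ContinuousLinearMap.snd ℝ (StrongDual ℝ X) (StrongDual ℝ Y))) p)
    -- curves on a real interval I
    (I : Set ℝ) (hI : I.OrdConnected)
    (ξv : ℝ → G × V) (a : ℝ → StrongDual ℝ X) (b : ℝ → StrongDual ℝ Y)
    (u : ℝ → StrongDual ℝ (G × V)) (dA : ℝ → StrongDual ℝ (G × V))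
    (hdA : ∀ t ∈ I, HasDerivAt (fun τ => A (ξv τ)) (dA t) t) :
    -- (i): under the matching control, the controlled EP momentum equation holds
    --      iff the matched EP momentum equation holds
    ((∀ t ∈ I, u t = -K (DUa (a t, b t)) (a t) - M (DUb (a t, b t)) (b t)) →
      ∀ t ∈ I,
        (dA t = adStar (ξv t) (A (ξv t)) - K (DU (a t)) (a t) + u t ↔
          dA t = adStar (ξv t) (A (ξv t))
            - K (DU (a t) + DUa (a t, b t)) (a t) - M (DUb (a t, b t)) (b t)))
    ∧
    -- (ii): conversely, if both equations hold at some t, the control is the matching one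
    (∀ t ∈ I,
      dA t = adStar (ξv t) (A (ξv t)) - K (DU (a t)) (a t) + u t →
      dA t = adStar (ξv t) (A (ξv t))
        - K (DU (a t) + DUa (a t, b t)) (a t) - M (DUb (a t, b t)) (b t) →
      u t = -K (DUa (a t, b t)) (a t) - M (DUb (a t, b t)) (b t)) :=
  matching_with_additional_variables_general adStar σ' K hK M A DU DUa DUb I ξv a b u dA
end

section
/- Let I ⊆ ℝ be an interval, J, D, M fixed real 3×3 matrices, m̄, m, g, l ∈ ℝ, χ ∈ ℝ³, and let Ω, v, Γ, h be differentiable curves on I with values in ℝ³, ℝ³, ℝ³, ℝ respectively. Set Π := JΩ + Dv and P := DᵀΩ + Mv, and suppose the controlled heavy-top-on-a-movable-base equations hold: Π' = Π × Ω + P × v − m g l χ × Γ, P' = P × Ω − m̄ g Γ + u, Γ' = Γ × Ω, h' = Γ·v, with control u(t) = m̄ g Γ(t) for all t ∈ I. Then P' = P × Ω on I, i.e. (Π, P, Γ) solves the reduced Euler–Poincaré system Π' = Π × Ω + P × v − m g l χ × Γ, P' = P × Ω, Γ' = Γ × Ω; moreover the functions t ↦ ‖P(t)‖², t ↦ P(t)·Γ(t),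 and t ↦ ‖Γ(t)‖² are constant on I. -/
open Matrix

infixl:74 " ×₃ " => crossProduct

/-! Once the control cancels gravity, `P` and `Γ` both evolve by `x' = x × Ω`. This flow is
skew-adjoint for the dot product, `(x × Ω) · y = -x · (y × Ω)` by cyclicity of the triple product,
so every pairwise dot product of `P` and `Γ` has zero derivative and is constant on the
interval `I`. -/

theorem Convex.is_const_of_hasDerivAt_zero {𝕜 G : Type*} [RCLike 𝕜] [NormedAddCommGroup G]
    [NormedSpace 𝕜 G] {f : 𝕜 → G} {s : Set 𝕜} (hs : Convex ℝ s)
    (hf : ∀ x ∈ s, HasDerivAt f 0 x) {x y : 𝕜} (hx : x ∈ s) (hy : y ∈ s) : f x = f y := by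
  have h := hs.norm_image_sub_le_of_norm_hasDerivWithin_le (C := 0)
    (fun z hz => (hf z hz).hasDerivWithinAt) (fun _ _ => norm_zero.le) hy hx
  rwa [zero_mul, norm_le_zero_iff, sub_eq_zero] at h

theorem HasDerivAt.dotProduct {𝕜 n : Type*} [NontriviallyNormedField 𝕜] [Fintype n]
    {f g : 𝕜 → n → 𝕜} {f' g' : n → 𝕜} {t : 𝕜}
    (hf : HasDerivAt f f' t) (hg : HasDerivAt g g' t) :
    HasDerivAt (fun s => f s ⬝ᵥ g s) (f' ⬝ᵥ g t + f t ⬝ᵥ g') t := by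
  have hsum : HasDerivAt (fun s => ∑ i, f s i * g s i) (∑ i, (f' i * g t i + f t i * g' i)) t :=
    HasDerivAt.fun_sum fun i _ => (hasDerivAt_pi.1 hf i).mul (hasDerivAt_pi.1 hg i)
  rw [Finset.sum_add_distrib] at hsum
  exact hsum

theorem cross_dotProduct_add_dotProduct_cross {R : Type*} [CommRing R] (x y w : Fin 3 → R) :
    (x ×₃ w) ⬝ᵥ y + x ⬝ᵥ (y ×₃ w) = 0 := by
  rw [dotProduct_comm, triple_product_permutation, ← cross_anticomm, dotProduct_neg,
    neg_add_cancel]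

theorem Convex.dotProduct_const_of_hasDerivAt_cross {s : Set ℝ} (hs : Convex ℝ s)
    {ω x y : ℝ → Fin 3 → ℝ} (hx : ∀ t ∈ s, HasDerivAt x (x t ×₃ ω t) t)
    (hy : ∀ t ∈ s, HasDerivAt y (y t ×₃ ω t) t) :
    ∀ a ∈ s, ∀ b ∈ s, x a ⬝ᵥ y a = x b ⬝ᵥ y b := by
  refine fun a ha b hb => hs.is_const_of_hasDerivAt_zero
    (f := fun t => x t ⬝ᵥ y t) (fun t ht => ?_) ha hb
  simpa only [cross_dotProduct_add_dotProduct_cross] using (hx t ht).dotProduct (hy t ht)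

theorem heavy_top_potential_shaping_general
    (I : Set ℝ) (hI : I.OrdConnected)
    (mbar g : ℝ)
    (Ω Γ : ℝ → Fin 3 → ℝ)
    (P : ℝ → Fin 3 → ℝ)
    -- the control u = m̄ g Γ
    (u : ℝ → Fin 3 → ℝ) (hu : ∀ t ∈ I, u t = (mbar * g) • Γ t)
    -- the controlled heavy-top-on-a-movable-base equations
    (hP : ∀ t ∈ I,
      HasDerivAt P (P t ×₃ Ω t - (mbar * g) • Γ t + u t) t)
    (hΓ : ∀ t ∈ I, HasDerivAt Γ (Γ t ×₃ Ω t) t) :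
    -- the linear-momentum equation reduces to P' = P × Ω ...
    (∀ t ∈ I, HasDerivAt P (P t ×₃ Ω t) t)
    -- ... and ‖P‖² = P ⬝ᵥ P, P·Γ, ‖Γ‖² = Γ ⬝ᵥ Γ are constant on I
    ∧ (∀ s ∈ I, ∀ t ∈ I, P s ⬝ᵥ P s = P t ⬝ᵥ P t)
    ∧ (∀ s ∈ I, ∀ t ∈ I, P s ⬝ᵥ Γ s = P t ⬝ᵥ Γ t)
    ∧ (∀ s ∈ I, ∀ t ∈ I, Γ s ⬝ᵥ Γ s = Γ t ⬝ᵥ Γ t) := by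
  have hP' : ∀ t ∈ I, HasDerivAt P (P t ×₃ Ω t) t := fun t ht => by
    simpa only [hu t ht, sub_add_cancel] using hP t ht
  have hconv : Convex ℝ I := hI.convex
  exact ⟨hP', hconv.dotProduct_const_of_hasDerivAt_cross hP' hP',
    hconv.dotProduct_const_of_hasDerivAt_cross hP' hΓ,
    hconv.dotProduct_const_of_hasDerivAt_cross hΓ hΓ⟩

/-- Potential shaping for the heavy top on a movable base: with the control
u = m̄ g Γ cancelling gravity on the base, the linear-momentum equation becomes
P' = P × Ω, so (Π, P, Γ) solves the reduced Euler–Poincaré system on 𝔰𝔢(3) × (ℝ³)*;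
moreover ‖P‖², P·Γ, ‖Γ‖² are conserved. -/
theorem heavy_top_potential_shaping
    (I : Set ℝ) (hI : I.OrdConnected)
    (J D M : Matrix (Fin 3) (Fin 3) ℝ) (mbar m g l : ℝ) (χ : Fin 3 → ℝ)
    (Ω v Γ : ℝ → Fin 3 → ℝ) (h : ℝ → ℝ)
    -- Ω, v, Γ, h are differentiable curves
    (hΩd : ∀ t ∈ I, DifferentiableAt ℝ Ω t) (hvd : ∀ t ∈ I, DifferentiableAt ℝ v t)
    -- the momenta Π = JΩ + Dv and P = DᵀΩ + Mv
    (Pang P : ℝ → Fin 3 → ℝ)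
    (hPangdef : ∀ t, Pang t = J *ᵥ Ω t + D *ᵥ v t)
    (hPdef : ∀ t, P t = Dᵀ *ᵥ Ω t + M *ᵥ v t)
    -- the control u = m̄ g Γ
    (u : ℝ → Fin 3 → ℝ) (hu : ∀ t ∈ I, u t = (mbar * g) • Γ t)
    -- the controlled heavy-top-on-a-movable-base equations
    (hPang : ∀ t ∈ I,
      HasDerivAt Pang (Pang t ×₃ Ω t + P t ×₃ v t - (m * g * l) • (χ ×₃ Γ t)) t)
    (hP : ∀ t ∈ I,
      HasDerivAt P (P t ×₃ Ω t - (mbar * g) • Γ t + u t) t)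
    (hΓ : ∀ t ∈ I, HasDerivAt Γ (Γ t ×₃ Ω t) t)
    (hh : ∀ t ∈ I, HasDerivAt h (Γ t ⬝ᵥ v t) t) :
    -- the linear-momentum equation reduces to P' = P × Ω ...
    (∀ t ∈ I, HasDerivAt P (P t ×₃ Ω t) t)
    -- ... and ‖P‖² = P ⬝ᵥ P, P·Γ, ‖Γ‖² = Γ ⬝ᵥ Γ are constant on I
    ∧ (∀ s ∈ I, ∀ t ∈ I, P s ⬝ᵥ P s = P t ⬝ᵥ P t)
    ∧ (∀ s ∈ I, ∀ t ∈ I, P s ⬝ᵥ Γ s = P t ⬝ᵥ Γ t)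
    ∧ (∀ s ∈ I, ∀ t ∈ I, Γ s ⬝ᵥ Γ s = Γ t ⬝ᵥ Γ t) :=
  heavy_top_potential_shaping_general I hI mbar g Ω Γ P u hu hP hΓ
end
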